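/- Let 1 ≤ p < ∞ and let (q_k)_{k≥0} be a non-increasing sequence of nonnegative real numbers with q₀ > 0. Then for every f ∈ L^p(G,μ) and every n ∈ ℕ with q_{2^n} > 0, one has (1/Q_{2^n}) Σ_{j=0}^{2^n−2} (q_j − q_{j+1})·j·∫_G ‖f(·+t) − f(·)‖_p |K_j(t)| dμ(t) ≤ 3 Σ_{s=0}^{n−1} ((n−s)/2^{n−s}) (q_{2^s}/q_{2^n}) ω_p(1/2^s, f), where for each t ∈ G the quantity ‖f(·+t) − f(·)‖_p is the L^p norm of x ↦ f(x+t) − f(x). -/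

import Mathlib

open MeasureTheory Finset Filter Topology

/-- The Walsh group `G = ∏_{k ∈ ℕ} Z₂`. -/
abbrev WalshG : Type := ℕ → ZMod 2

/-- The normalized Haar measure on `G`, i.e. the product of the uniform
probability measures on the coordinates. -/
noncomputable def μG : Measure WalshG := Measure.addHaarMeasure ⊤

/-- The Walsh functions `w_n(x) = ∏_k r_k(x)^{n_k}` where `r_k(x) = (-1)^{x_k}`
and `n = ∑_k n_k 2^k` is the binary expansion of `n`. -/
noncomputable def walsh (n : ℕ) (x : WalshG) : ℝ :=
  ∏ k ∈ Finset.range n, if n.testBit k then (-1 : ℝ) ^ ((x k).val) else 1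

/-- Walsh–Fourier coefficient `f̂(k) = ∫_G f w_k dμ`. -/
noncomputable def walshFourier (f : WalshG → ℝ) (k : ℕ) : ℝ :=
  ∫ x, f x * walsh k x ∂μG

/-- Partial sums `S_n f = ∑_{k=0}^{n-1} f̂(k) w_k` of the Walsh–Fourier series. -/
noncomputable def walshSum (f : WalshG → ℝ) (n : ℕ) (x : WalshG) : ℝ :=
  ∑ k ∈ Finset.range n, walshFourier f k * walsh k x

/-- Fejér means `σ_n f = (1/n) ∑_{k=1}^n S_k f`. -/
noncomputable def fejerMean (f : WalshG → ℝ) (n : ℕ) (x : WalshG) : ℝ :=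
  (1 / (n : ℝ)) * ∑ k ∈ Finset.Icc 1 n, walshSum f k x

/-- `Q_n = ∑_{k=0}^{n-1} q_k`. -/
noncomputable def Qnor (q : ℕ → ℝ) (n : ℕ) : ℝ := ∑ k ∈ Finset.range n, q k

/-- Nörlund means `t_n f = (1/Q_n) ∑_{k=1}^n q_{n-k} S_k f`. -/
noncomputable def norlundMean (q : ℕ → ℝ) (f : WalshG → ℝ) (n : ℕ) (x : WalshG) : ℝ :=
  (1 / Qnor q n) * ∑ k ∈ Finset.Icc 1 n, q (n - k) * walshSum f k x

/-- Dirichlet kernels `D_n = ∑_{k=0}^{n-1} w_k`. -/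
noncomputable def dirichletKernel (n : ℕ) (x : WalshG) : ℝ :=
  ∑ k ∈ Finset.range n, walsh k x

/-- Fejér kernels `K_n = (1/n) ∑_{k=1}^n D_k`. -/
noncomputable def fejerKernel (n : ℕ) (x : WalshG) : ℝ :=
  (1 / (n : ℝ)) * ∑ k ∈ Finset.Icc 1 n, dirichletKernel k x

/-- `I_N = {y ∈ G : y₀ = ⋯ = y_{N-1} = 0}`. -/
def IN (N : ℕ) : Set WalshG := {y | ∀ k < N, y k = 0}

/-- The `L^p(G, μ)` norm (with real exponent `p`). -/
noncomputable def lpNorm (p : ℝ) (f : WalshG → ℝ) : ℝ :=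
  (eLpNorm f (ENNReal.ofReal p) μG).toReal

/-- `‖f(·+t) - f(·)‖_p` for a fixed `t ∈ G`. -/
noncomputable def lpTransDiff (p : ℝ) (f : WalshG → ℝ) (t : WalshG) : ℝ :=
  lpNorm p (fun x => f (x + t) - f x)

/-- Modulus of continuity `ω_p(1/2^N, f) = sup_{t ∈ I_N} ‖f(·+t) - f(·)‖_p`. -/
noncomputable def modulus (p : ℝ) (f : WalshG → ℝ) (N : ℕ) : ℝ :=
  ⨆ t ∈ IN N, lpTransDiff p f t

/-- Convolution `(g ∗ f)(x) = ∫_G f(t) g(x+t) dμ(t)` (note `x - t = x + t` in `G`). -/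
noncomputable def walshConv (g f : WalshG → ℝ) (x : WalshG) : ℝ :=
  ∫ t, f t * g (x + t) ∂μG



/-! ### Auxiliary development -/

section Aux

open Classical in
/-- indicator of `IN m` as a function. -/
noncomputable def indI (m : ℕ) (x : WalshG) : ℝ := if ∀ k < m, x k = 0 then 1 else 0

/-- the `t`-th unit vector in the Walsh group. -/
def et (t : ℕ) : WalshG := fun k => if k = t then 1 else 0

/-- `SD n = ∑_{k=1}^n D_k = n·K_n`. -/
noncomputable def SD (n : ℕ) (x : WalshG) : ℝ := ∑ k ∈ Finset.Icc 1 n, dirichletKernel k x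

/-- explicit (Yano) form of `SD (2^m)`. -/
noncomputable def Hfun (m : ℕ) (x : WalshG) : ℝ :=
  ((2:ℝ) ^ m * (2 ^ m + 1) / 2) * indI m x
    + ∑ t ∈ Finset.range m, ((2:ℝ) ^ (m + t) / 2) * indI m (et t + x)

/-- majorant of `|SD j|` for `j < 2^(u+1)`. -/
noncomputable def Bmaj (u : ℕ) (x : WalshG) : ℝ :=
  ∑ m ∈ Finset.range (u + 1), (Hfun m x + 2 ^ m * dirichletKernel (2 ^ m) x)

instance : IsProbabilityMeasure μG := by
  constructor
  have := Measure.addHaarMeasure_self (G := WalshG) (K₀ := ⊤)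
  simpa [μG] using this
instance : μG.IsAddLeftInvariant := by unfold μG; infer_instance
instance : μG.IsAddRightInvariant := by unfold μG; infer_instance

lemma measurable_IN (m : ℕ) : MeasurableSet (IN m) := by
  have : IN m = ⋂ k ∈ Finset.range m, (fun y : WalshG => y k) ⁻¹' {0} := by
    ext y; simp [IN]
  rw [this]
  exact MeasurableSet.biInter (Set.to_countable _) fun k _ =>
    (measurable_pi_apply k) (MeasurableSet.singleton 0)

lemma meas_pres_add_left (t : WalshG) : MeasurePreserving (fun x => t + x) μG μG :=
  measurePreserving_add_left μG t

/-- extension of a finite vector by zeros. -/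
def extv (m : ℕ) (c : Fin m → ZMod 2) : WalshG := fun k => if h : k < m then c ⟨k, h⟩ else 0

lemma muIN (m : ℕ) : μG (IN m) = (2 ^ m)⁻¹ := by
  classical
  have hpre : ∀ c : Fin m → ZMod 2,
      (fun x => extv m c + x) ⁻¹' (IN m) = {x : WalshG | ∀ k : Fin m, x k = c k} := by
    intro c
    ext x
    simp only [Set.mem_preimage, IN, Set.mem_setOf_eq]
    constructor
    · intro h k
      have := h k k.2
      simp only [Pi.add_apply, extv, dif_pos k.2] at this
      have h2 : x k = -(c ⟨(k:ℕ), k.2⟩) := by linear_combination this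
      rw [h2, CharTwo.neg_eq]
    · intro h k hk
      have := h ⟨k, hk⟩
      simp only [Pi.add_apply, extv, dif_pos hk]
      rw [this]
      exact CharTwo.add_self_eq_zero _
  have hmeas : ∀ c : Fin m → ZMod 2, μG {x : WalshG | ∀ k : Fin m, x k = c k} = μG (IN m) := by
    intro c
    rw [← hpre c]
    exact (meas_pres_add_left (extv m c)).measure_preimage (measurable_IN m).nullMeasurableSet
  have hunion : (⋃ c : Fin m → ZMod 2, {x : WalshG | ∀ k : Fin m, x k = c k}) = Set.univ := by
    ext x; simp only [Set.mem_iUnion, Set.mem_univ, iff_true]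
    exact ⟨fun k => x k, fun k => rfl⟩
  have hdisj : Pairwise (Function.onFun Disjoint
      (fun c : Fin m → ZMod 2 => {x : WalshG | ∀ k : Fin m, x k = c k})) := by
    intro c c' hcc
    simp only [Function.onFun, Set.disjoint_left]
    intro x hx hx'
    exact hcc (funext fun k => (hx k).symm.trans (hx' k))
  have hmeas2 : ∀ c : Fin m → ZMod 2, MeasurableSet {x : WalshG | ∀ k : Fin m, x k = c k} := by
    intro c
    have : {x : WalshG | ∀ k : Fin m, x k = c k}
        = ⋂ k : Fin m, (fun y : WalshG => y k) ⁻¹' {c k} := by ext y; simp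
    rw [this]
    exact MeasurableSet.iInter fun k => (measurable_pi_apply _) (MeasurableSet.singleton _)
  have htot : μG Set.univ = ∑ c : Fin m → ZMod 2, μG {x : WalshG | ∀ k : Fin m, x k = c k} := by
    rw [← hunion, measure_iUnion hdisj hmeas2, tsum_fintype]
  rw [measure_univ] at htot
  have hcard : (Fintype.card (Fin m → ZMod 2) : ENNReal) = 2 ^ m := by
    simp [Fintype.card_fun]
  have : (2 ^ m) * μG (IN m) = (1 : ENNReal) := by
    rw [eq_comm]
    rw [htot]
    simp only [hmeas]
    rw [Finset.sum_const, Finset.card_univ, nsmul_eq_mul, hcard]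
  exact ENNReal.eq_inv_of_mul_eq_one_left (by rw [mul_comm]; exact this)

/-! #### Walsh function algebra -/

lemma walsh_eq_prod {N M : ℕ} (h : N < 2 ^ M) (x : WalshG) :
    walsh N x = ∏ k ∈ Finset.range M, if N.testBit k then (-1 : ℝ) ^ ((x k).val) else 1 := by
  have key : ∀ M₁ M₂ : ℕ, M₁ ≤ M₂ → (∀ k, M₁ ≤ k → N.testBit k = false) →
      (∏ k ∈ Finset.range M₂, if N.testBit k then (-1 : ℝ) ^ ((x k).val) else 1)
      = ∏ k ∈ Finset.range M₁, if N.testBit k then (-1 : ℝ) ^ ((x k).val) else 1 := by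
    intro M₁ M₂ hle hbit
    refine (Finset.prod_subset (Finset.range_subset_range.mpr hle) ?_).symm
    intro k _ hk
    rw [Finset.mem_range, not_lt] at hk
    rw [hbit k hk, if_neg (by simp)]
  have hN : ∀ k, N ≤ k → N.testBit k = false := fun k hk =>
    Nat.testBit_lt_two_pow (lt_of_lt_of_le (Nat.lt_two_pow_self (n := N))
      (Nat.pow_le_pow_right (by norm_num) hk))
  have hM : ∀ k, M ≤ k → N.testBit k = false := fun k hk =>
    Nat.testBit_lt_two_pow (lt_of_lt_of_le h (Nat.pow_le_pow_right (by norm_num) hk))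
  rcases le_total N M with hc | hc
  · rw [walsh, key N M hc hN]
  · rw [walsh, key M N hc hM]

lemma walsh_two_pow (m : ℕ) (x : WalshG) : walsh (2 ^ m) x = (-1 : ℝ) ^ ((x m).val) := by
  rw [walsh_eq_prod (pow_lt_pow_right₀ one_lt_two (Nat.lt_succ_self m)) x]
  rw [Finset.prod_eq_single m]
  · simp [Nat.testBit_two_pow_self]
  · intro k _ hk
    rw [Nat.testBit_two_pow_of_ne (Ne.symm hk)]
    simp
  · intro h; exact absurd (Finset.self_mem_range_succ m) h

lemma walsh_two_pow_mul {m l : ℕ} (hl : l < 2 ^ m) (x : WalshG) :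
    walsh (2 ^ m + l) x = walsh (2 ^ m) x * walsh l x := by
  have h1 : 2 ^ m + l < 2 ^ (m + 1) := by
    have : (2:ℕ) ^ (m+1) = 2 ^ m + 2 ^ m := by ring
    omega
  rw [walsh_eq_prod h1 x, Finset.prod_range_succ, walsh_eq_prod hl x, walsh_two_pow]
  have hm : (2 ^ m + l).testBit m = true := by
    rw [Nat.testBit_two_pow_add_eq, Nat.testBit_lt_two_pow hl]
    rfl
  rw [hm, if_pos rfl, mul_comm]
  congr 1
  refine Finset.prod_congr rfl fun k hk => ?_
  rw [Finset.mem_range] at hk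
  rw [Nat.testBit_two_pow_add_gt hk]

lemma walsh_zero_eq (x : WalshG) : walsh 0 x = 1 := by simp [walsh]

lemma walsh_two_pow_abs (m : ℕ) (x : WalshG) : |walsh (2 ^ m) x| = 1 := by
  rw [walsh_two_pow, abs_pow, abs_neg, abs_one, one_pow]

/-! #### indicator algebra -/

lemma indI_nonneg (m : ℕ) (x : WalshG) : 0 ≤ indI m x := by
  unfold indI; split <;> norm_num

lemma indI_zero (x : WalshG) : indI 0 x = 1 := by simp [indI]

lemma et_add_apply (t : ℕ) (x : WalshG) (k : ℕ) :
    (et t + x) k = if k = t then 1 + x k else x k := by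
  by_cases h : k = t <;> simp [et, h]

lemma zmod2_cases (a : ZMod 2) : a = 0 ∨ a = 1 := by revert a; decide

lemma indI_succ_of_zero {m : ℕ} {x : WalshG} (h : x m = 0) : indI (m + 1) x = indI m x := by
  unfold indI
  congr 1
  simp only [eq_iff_iff]
  constructor
  · intro hh k hk; exact hh k (by omega)
  · intro hh k hk
    rcases Nat.lt_succ_iff_lt_or_eq.mp hk with h1 | h1
    · exact hh k h1
    · rw [h1]; exact h

lemma indI_succ_of_one {m : ℕ} {x : WalshG} (h : x m = 1) : indI (m + 1) x = 0 := by
  unfold indI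
  rw [if_neg]
  intro hh
  have := hh m (Nat.lt_succ_self m)
  rw [h] at this
  exact one_ne_zero this

/-! #### Dirichlet kernel -/

lemma dirichlet_split {m i : ℕ} (hi : i ≤ 2 ^ m) (x : WalshG) :
    dirichletKernel (2 ^ m + i) x
      = dirichletKernel (2 ^ m) x + walsh (2 ^ m) x * dirichletKernel i x := by
  unfold dirichletKernel
  rw [Finset.sum_range_add, Finset.mul_sum]
  congr 1
  refine Finset.sum_congr rfl fun k hk => ?_
  rw [Finset.mem_range] at hk
  exact walsh_two_pow_mul (lt_of_lt_of_le hk hi) x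

lemma dirichlet_one (x : WalshG) : dirichletKernel 1 x = 1 := by
  simp [dirichletKernel, walsh_zero_eq]

lemma dirichlet_two_pow (m : ℕ) (x : WalshG) :
    dirichletKernel (2 ^ m) x = 2 ^ m * indI m x := by
  induction m with
  | zero => simp [dirichlet_one, indI_zero]
  | succ m ih =>
    have h : (2:ℕ) ^ (m+1) = 2 ^ m + 2 ^ m := by ring
    rw [h, dirichlet_split le_rfl x, ih, walsh_two_pow]
    rcases zmod2_cases (x m) with hx | hx
    · rw [indI_succ_of_zero hx, hx]
      show (2:ℝ)^m * indI m x + (-1:ℝ)^(0:ℕ) * (2^m * indI m x) = 2^(m+1) * indI m x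
      ring
    · rw [indI_succ_of_one hx, hx]
      show (2:ℝ)^m * indI m x + (-1:ℝ)^(1:ℕ) * (2^m * indI m x) = 2^(m+1) * 0
      ring

lemma dirichlet_two_pow_nonneg (m : ℕ) (x : WalshG) : 0 ≤ dirichletKernel (2 ^ m) x := by
  rw [dirichlet_two_pow]
  exact mul_nonneg (by positivity) (indI_nonneg m x)

/-! #### SD -/

lemma SD_zero (x : WalshG) : SD 0 x = 0 := by simp [SD]

lemma SD_one (x : WalshG) : SD 1 x = 1 := by simp [SD, dirichlet_one]

lemma Icc_one_eq_Ioc (n : ℕ) : Finset.Icc 1 n = Finset.Ioc 0 n := by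
  ext k; simp [Nat.lt_iff_add_one_le]

lemma SD_split {m r : ℕ} (hr : r ≤ 2 ^ m) (x : WalshG) :
    SD (2 ^ m + r) x = SD (2 ^ m) x + r * dirichletKernel (2 ^ m) x
      + walsh (2 ^ m) x * SD r x := by
  unfold SD
  rw [Icc_one_eq_Ioc, Icc_one_eq_Ioc, Icc_one_eq_Ioc,
    ← Finset.sum_Ioc_consecutive _ (Nat.zero_le (2^m)) (Nat.le_add_right _ r)]
  have hmap : Finset.Ioc (2 ^ m) (2 ^ m + r) =
      Finset.map (addLeftEmbedding (2 ^ m)) (Finset.Ioc 0 r) := by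
    rw [Finset.map_add_left_Ioc, Nat.add_zero]
  have hsec : ∑ i ∈ Finset.Ioc (2 ^ m) (2 ^ m + r), dirichletKernel i x
      = r * dirichletKernel (2 ^ m) x
        + walsh (2 ^ m) x * ∑ k ∈ Finset.Ioc 0 r, dirichletKernel k x := by
    rw [hmap, Finset.sum_map]
    have hcg : ∀ i ∈ Finset.Ioc 0 r, dirichletKernel (addLeftEmbedding (2 ^ m) i) x
        = dirichletKernel (2 ^ m) x + walsh (2 ^ m) x * dirichletKernel i x := by
      intro i hi
      rw [Finset.mem_Ioc] at hi
      exact dirichlet_split (le_trans hi.2 hr) x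
    rw [Finset.sum_congr rfl hcg, Finset.sum_add_distrib, ← Finset.mul_sum]
    simp only [Finset.sum_const, Nat.card_Ioc, nsmul_eq_mul, Nat.sub_zero]
  rw [hsec]
  ring

lemma Hfun_nonneg (m : ℕ) (x : WalshG) : 0 ≤ Hfun m x := by
  unfold Hfun
  have h1 : (0:ℝ) ≤ ((2:ℝ) ^ m * (2 ^ m + 1) / 2) * indI m x :=
    mul_nonneg (by positivity) (indI_nonneg m x)
  have h2 : (0:ℝ) ≤ ∑ t ∈ Finset.range m, ((2:ℝ) ^ (m + t) / 2) * indI m (et t + x) :=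
    Finset.sum_nonneg fun t _ => mul_nonneg (by positivity) (indI_nonneg m _)
  linarith

lemma SD_two_pow_eq (m : ℕ) (x : WalshG) : SD (2 ^ m) x = Hfun m x := by
  induction m generalizing x with
  | zero => simp [SD_one, Hfun, indI_zero]
  | succ m ih =>
    have h : (2:ℕ) ^ (m+1) = 2 ^ m + 2 ^ m := by ring
    rw [h, SD_split le_rfl x, ih, walsh_two_pow, dirichlet_two_pow]
    rcases zmod2_cases (x m) with hx | hx
    · -- x m = 0
      have e1 : indI (m+1) x = indI m x := indI_succ_of_zero hx
      have e2 : ∀ t ∈ Finset.range m, indI (m+1) (et t + x) = indI m (et t + x) := by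
        intro t ht
        rw [Finset.mem_range] at ht
        refine indI_succ_of_zero ?_
        rw [et_add_apply, if_neg (by omega)]
        exact hx
      have e3 : indI (m+1) (et m + x) = 0 := by
        refine indI_succ_of_one ?_
        rw [et_add_apply, if_pos rfl, hx, add_zero]
      have e4 : ∑ t ∈ Finset.range m, ((2:ℝ)^(m+1+t)/2) * indI (m+1) (et t + x)
          = 2 * ∑ t ∈ Finset.range m, ((2:ℝ)^(m+t)/2) * indI m (et t + x) := by
        rw [Finset.mul_sum]
        refine Finset.sum_congr rfl fun t ht => ?_
        rw [e2 t ht]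
        ring
      have hR : Hfun (m+1) x = ((2:ℝ)^(m+1)*(2^(m+1)+1)/2) * indI m x
          + 2 * ∑ t ∈ Finset.range m, ((2:ℝ)^(m+t)/2) * indI m (et t + x) := by
        unfold Hfun
        rw [Finset.sum_range_succ, e1, e3, e4]
        ring
      rw [hR]
      unfold Hfun
      rw [hx, ZMod.val_zero, pow_zero]
      push_cast
      ring
    · -- x m = 1
      have e2 : ∀ t ∈ Finset.range m, indI (m+1) (et t + x) = 0 := by
        intro t ht
        rw [Finset.mem_range] at ht
        refine indI_succ_of_one ?_
        rw [et_add_apply, if_neg (by omega)]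
        exact hx
      have e3 : indI (m+1) (et m + x) = indI m x := by
        have h0 : (et m + x) m = 0 := by
          rw [et_add_apply, if_pos rfl, hx]
          decide
        rw [indI_succ_of_zero h0]
        unfold indI
        congr 1
        simp only [eq_iff_iff]
        constructor <;> intro hh k hk
        · have := hh k hk
          rwa [et_add_apply, if_neg (by omega)] at this
        · rw [et_add_apply, if_neg (by omega)]
          exact hh k hk
      have hR : Hfun (m+1) x = ((2:ℝ)^(m+1+m)/2) * indI m x := by
        unfold Hfun
        rw [Finset.sum_range_succ, indI_succ_of_one hx, e3,
          Finset.sum_congr rfl fun t ht => by rw [e2 t ht]]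
        simp
      rw [hR]
      unfold Hfun
      rw [hx]
      have hv : ((1:ZMod 2)).val = 1 := rfl
      rw [hv, pow_one]
      push_cast
      ring

/-! #### The majorant -/

lemma Bmaj_nonneg (u : ℕ) (x : WalshG) : 0 ≤ Bmaj u x :=
  Finset.sum_nonneg fun m _ => add_nonneg (Hfun_nonneg m x)
    (mul_nonneg (by positivity) (dirichlet_two_pow_nonneg m x))

lemma Bmaj_succ (u : ℕ) (x : WalshG) :
    Bmaj (u + 1) x = Bmaj u x
      + (Hfun (u + 1) x + 2 ^ (u + 1) * dirichletKernel (2 ^ (u + 1)) x) :=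
  Finset.sum_range_succ _ _

lemma abs_SD_le (u : ℕ) : ∀ j, j < 2 ^ (u + 1) → ∀ x : WalshG, |SD j x| ≤ Bmaj u x := by
  induction u with
  | zero =>
    intro j hj x
    have hB : Bmaj 0 x = Hfun 0 x + dirichletKernel 1 x := by
      simp [Bmaj]
    have hH : Hfun 0 x = 1 := by simp [Hfun, indI_zero]
    interval_cases j
    · rw [SD_zero, abs_zero, hB, hH, dirichlet_one]; norm_num
    · rw [SD_one, hB, hH, dirichlet_one]; norm_num
  | succ u ih =>
    intro j hj x
    by_cases hc : j < 2 ^ (u + 1)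
    · calc |SD j x| ≤ Bmaj u x := ih j hc x
        _ ≤ Bmaj (u + 1) x := by
            rw [Bmaj_succ]
            nlinarith [dirichlet_two_pow_nonneg (u+1) x, Hfun_nonneg (u+1) x,
              pow_pos (zero_lt_two (α := ℝ)) (u+1)]
    · push_neg at hc
      set r := j - 2 ^ (u + 1) with hr
      have hrlt : r < 2 ^ (u + 1) := by
        have : (2:ℕ) ^ (u + 2) = 2 ^ (u+1) + 2 ^ (u+1) := by ring
        omega
      have hjr : j = 2 ^ (u + 1) + r := by omega
      rw [hjr, SD_split (le_of_lt hrlt) x]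
      have h1 : |SD (2 ^ (u+1)) x| = SD (2 ^ (u+1)) x := by
        rw [abs_of_nonneg]; rw [SD_two_pow_eq]; exact Hfun_nonneg _ _
      calc |SD (2^(u+1)) x + r * dirichletKernel (2^(u+1)) x + walsh (2^(u+1)) x * SD r x|
          ≤ |SD (2^(u+1)) x| + |(r:ℝ) * dirichletKernel (2^(u+1)) x|
            + |walsh (2^(u+1)) x * SD r x| := abs_add_three _ _ _
        _ ≤ SD (2^(u+1)) x + 2^(u+1) * dirichletKernel (2^(u+1)) x + Bmaj u x := by
            have h2 : |(r:ℝ) * dirichletKernel (2^(u+1)) x|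
                ≤ 2^(u+1) * dirichletKernel (2^(u+1)) x := by
              rw [abs_mul, Nat.abs_cast, abs_of_nonneg (dirichlet_two_pow_nonneg _ x)]
              refine mul_le_mul_of_nonneg_right ?_ (dirichlet_two_pow_nonneg _ x)
              exact_mod_cast le_of_lt hrlt
            have h3 : |walsh (2^(u+1)) x * SD r x| ≤ Bmaj u x := by
              rw [abs_mul, walsh_two_pow_abs, one_mul]
              exact ih r hrlt x
            rw [h1]
            linarith
        _ ≤ Bmaj (u+1) x := by
            rw [Bmaj_succ, SD_two_pow_eq]
            linarith [Bmaj_nonneg u x, Hfun_nonneg (u+1) x]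

/-! #### lpTransDiff and modulus -/

lemma lpTD_nonneg (p : ℝ) (f : WalshG → ℝ) (t : WalshG) : 0 ≤ lpTransDiff p f t :=
  ENNReal.toReal_nonneg

section ModSec
variable {p : ℝ} {f : WalshG → ℝ}

lemma lpTD_le_two_lpNorm (hp : 1 ≤ p) (hf : MemLp f (ENNReal.ofReal p) μG) (t : WalshG) :
    lpTransDiff p f t ≤ 2 * lpNorm p f := by
  unfold lpTransDiff _root_.lpNorm
  have hmp : MeasurePreserving (fun x : WalshG => x + t) μG μG :=
    measurePreserving_add_right μG t
  have htr : AEStronglyMeasurable (fun x : WalshG => f (x + t)) μG :=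
    hf.aestronglyMeasurable.comp_measurePreserving hmp
  have h1 : eLpNorm (fun x : WalshG => f (x + t)) (ENNReal.ofReal p) μG
      = eLpNorm f (ENNReal.ofReal p) μG :=
    eLpNorm_comp_measurePreserving hf.aestronglyMeasurable hmp
  have h2 := eLpNorm_sub_le (μ := μG) (p := ENNReal.ofReal p)
    htr hf.aestronglyMeasurable (by
      rw [← ENNReal.ofReal_one]
      exact ENNReal.ofReal_le_ofReal hp)
  have h3 : eLpNorm ((fun x : WalshG => f (x + t)) - f) (ENNReal.ofReal p) μG
      ≤ 2 * eLpNorm f (ENNReal.ofReal p) μG := by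
    rw [two_mul]
    calc _ ≤ _ := h2
    _ = _ := by rw [h1]
  have hfin : 2 * eLpNorm f (ENNReal.ofReal p) μG ≠ ⊤ :=
    ENNReal.mul_ne_top (by norm_num) hf.eLpNorm_ne_top
  have := ENNReal.toReal_mono hfin h3
  rw [ENNReal.toReal_mul] at this
  simp at this
  exact this

lemma bdd_mod (hp : 1 ≤ p) (hf : MemLp f (ENNReal.ofReal p) μG) (s : ℕ) :
    BddAbove (Set.range fun t => ⨆ _ : t ∈ IN s, lpTransDiff p f t) := by
  refine ⟨max (2 * lpNorm p f) 0, ?_⟩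
  rintro y ⟨t, rfl⟩
  show (⨆ _ : t ∈ IN s, lpTransDiff p f t) ≤ max (2 * lpNorm p f) 0
  by_cases h : t ∈ IN s
  · rw [ciSup_pos h]
    exact le_max_of_le_left (lpTD_le_two_lpNorm hp hf t)
  · haveI : IsEmpty (t ∈ IN s) := ⟨h⟩
    rw [iSup_of_empty']
    exact le_max_of_le_right (le_of_eq (Real.sSup_empty))

lemma lpTD_le_modulus (hp : 1 ≤ p) (hf : MemLp f (ENNReal.ofReal p) μG)
    {s : ℕ} {x : WalshG} (hx : x ∈ IN s) : lpTransDiff p f x ≤ modulus p f s := by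
  unfold modulus
  have := le_ciSup (bdd_mod hp hf s) x
  rwa [ciSup_pos hx] at this

lemma modulus_nonneg (hp : 1 ≤ p) (hf : MemLp f (ENNReal.ofReal p) μG) (s : ℕ) :
    0 ≤ modulus p f s := by
  have h0 : (0 : WalshG) ∈ IN s := fun k _ => rfl
  have := lpTD_le_modulus hp hf h0
  refine le_trans ?_ this
  unfold lpTransDiff _root_.lpNorm
  have hz : (fun x : WalshG => f (x + 0) - f x) = fun _ => (0:ℝ) := by
    funext x; rw [add_zero, sub_self]
  rw [hz]
  simp [eLpNorm_zero']

end ModSec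

end Aux


section IntAux
variable {p : ℝ} {f : WalshG → ℝ}

lemma measurable_shift_pre (m : ℕ) (v : WalshG) :
    MeasurableSet ((fun x => v + x) ⁻¹' (IN m)) :=
  (measurable_const_add v) (measurable_IN m)

lemma indI_mul_eq_indicator (m : ℕ) (v : WalshG) (c : ℝ) :
    (fun x => c * indI m (v + x))
      = Set.indicator ((fun x => v + x) ⁻¹' (IN m)) (fun _ => c) := by
  classical
  funext x
  rw [Set.indicator_apply]
  by_cases h : ∀ k < m, (v + x) k = 0
  · rw [if_pos (show x ∈ (fun x => v + x) ⁻¹' (IN m) from h),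
      show indI m (v + x) = 1 from by unfold indI; rw [if_pos h], mul_one]
  · rw [if_neg (show x ∉ (fun x => v + x) ⁻¹' (IN m) from h),
      show indI m (v + x) = 0 from by unfold indI; rw [if_neg h], mul_zero]

lemma integrable_indIc (m : ℕ) (v : WalshG) (c : ℝ) :
    Integrable (fun x => c * indI m (v + x)) μG := by
  rw [indI_mul_eq_indicator]
  exact (integrable_const c).indicator (measurable_shift_pre m v)

lemma integral_indIc (m : ℕ) (v : WalshG) (c : ℝ) :
    ∫ x, c * indI m (v + x) ∂μG = c / 2 ^ m := by
  rw [indI_mul_eq_indicator, integral_indicator_const c (measurable_shift_pre m v)]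
  have h1 : μG ((fun x => v + x) ⁻¹' (IN m)) = (2 ^ m)⁻¹ := by
    rw [(meas_pres_add_left v).measure_preimage (measurable_IN m).nullMeasurableSet, muIN]
  rw [measureReal_def, h1, smul_eq_mul]
  have h2 : ((2 ^ m : ENNReal)⁻¹).toReal = ((2:ℝ) ^ m)⁻¹ := by
    rw [ENNReal.toReal_inv]
    norm_num
  rw [h2, inv_mul_eq_div]

/-- the simple majorant of `lpTransDiff · * Bmaj u ·`. -/
noncomputable def Phi (p : ℝ) (f : WalshG → ℝ) (u : ℕ) (x : WalshG) : ℝ :=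
  ∑ m ∈ Finset.range (u + 1),
    ((modulus p f m * ((2:ℝ) ^ m * (2 ^ m + 1) / 2 + 2 ^ m * 2 ^ m)) * indI m x
      + ∑ t ∈ Finset.range m, (modulus p f t * ((2:ℝ) ^ (m + t) / 2)) * indI m (et t + x))

/-- the value of `∫ Phi`. -/
noncomputable def IntPhi (p : ℝ) (f : WalshG → ℝ) (u : ℕ) : ℝ :=
  ∑ m ∈ Finset.range (u + 1),
    (modulus p f m * ((2:ℝ) ^ m * (2 ^ m + 1) / 2 + 2 ^ m * 2 ^ m) / 2 ^ m
      + ∑ t ∈ Finset.range m, modulus p f t * ((2:ℝ) ^ (m + t) / 2) / 2 ^ m)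

lemma indI_zero_add (m : ℕ) (c : ℝ) :
    (fun x : WalshG => c * indI m x) = fun x => c * indI m ((0 : WalshG) + x) := by
  funext x; rw [zero_add]

lemma integrable_Phi (u : ℕ) : Integrable (Phi p f u) μG := by
  unfold Phi
  refine integrable_finset_sum _ fun m _ => Integrable.add ?_ ?_
  · rw [indI_zero_add]
    exact integrable_indIc m 0 _
  · exact integrable_finset_sum _ fun t _ => integrable_indIc m (et t) _

lemma integral_Phi (u : ℕ) : ∫ x, Phi p f u x ∂μG = IntPhi p f u := by
  unfold Phi IntPhi
  rw [MeasureTheory.integral_finset_sum (Finset.range (u+1))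
    (f := fun m x => (modulus p f m * ((2:ℝ) ^ m * (2 ^ m + 1) / 2 + 2 ^ m * 2 ^ m)) * indI m x
      + ∑ t ∈ Finset.range m, (modulus p f t * ((2:ℝ) ^ (m + t) / 2)) * indI m (et t + x))
    (fun m _ => Integrable.add
      (by rw [indI_zero_add]; exact integrable_indIc m 0 _)
      (integrable_finset_sum _ fun t _ => integrable_indIc m (et t) _))]
  refine Finset.sum_congr rfl fun m _ => ?_
  rw [integral_add (by rw [indI_zero_add]; exact integrable_indIc m 0 _)
    (integrable_finset_sum _ fun t _ => integrable_indIc m (et t) _)]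
  congr 1
  · rw [indI_zero_add, integral_indIc m 0 _]
  · rw [MeasureTheory.integral_finset_sum (Finset.range m)
      (f := fun t x => (modulus p f t * ((2:ℝ) ^ (m + t) / 2)) * indI m (et t + x))
      (fun t _ => integrable_indIc m (et t) _)]
    exact Finset.sum_congr rfl fun t _ => integral_indIc m (et t) _

lemma lpTD_mul_Bmaj_le (hp : 1 ≤ p) (hf : MemLp f (ENNReal.ofReal p) μG) (u : ℕ)
    (x : WalshG) : lpTransDiff p f x * Bmaj u x ≤ Phi p f u x := by
  unfold Bmaj Phi
  rw [Finset.mul_sum]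
  refine Finset.sum_le_sum fun m _ => ?_
  rw [dirichlet_two_pow]
  have key1 : lpTransDiff p f x * indI m x ≤ modulus p f m * indI m x := by
    rcases em (∀ k < m, x k = 0) with h | h
    · have h1 : indI m x = 1 := by unfold indI; rw [if_pos h]
      rw [h1, mul_one, mul_one]; exact lpTD_le_modulus hp hf h
    · have h1 : indI m x = 0 := by unfold indI; rw [if_neg h]
      rw [h1, mul_zero, mul_zero]
  have key2 : ∀ t ∈ Finset.range m,
      lpTransDiff p f x * indI m (et t + x) ≤ modulus p f t * indI m (et t + x) := by
    intro t ht
    rw [Finset.mem_range] at ht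
    rcases em (∀ k < m, (et t + x) k = 0) with h | h
    · have h1 : indI m (et t + x) = 1 := by unfold indI; rw [if_pos h]
      rw [h1, mul_one, mul_one]
      refine lpTD_le_modulus hp hf ?_
      intro k hk
      have := h k (lt_trans hk ht)
      rwa [et_add_apply, if_neg (by omega)] at this
    · have h1 : indI m (et t + x) = 0 := by unfold indI; rw [if_neg h]
      rw [h1, mul_zero, mul_zero]
  have step1 : lpTransDiff p f x * (Hfun m x + 2 ^ m * (2 ^ m * indI m x))
      = ((2:ℝ) ^ m * (2 ^ m + 1) / 2 + 2 ^ m * 2 ^ m) * (lpTransDiff p f x * indI m x)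
        + ∑ t ∈ Finset.range m,
            ((2:ℝ) ^ (m + t) / 2) * (lpTransDiff p f x * indI m (et t + x)) := by
    unfold Hfun
    rw [mul_add, mul_add, Finset.mul_sum, ← Finset.sum_congr rfl
      (fun t _ => by ring :
        ∀ t ∈ Finset.range m, ((2:ℝ) ^ (m + t) / 2) * (lpTransDiff p f x * indI m (et t + x))
          = lpTransDiff p f x * (((2:ℝ) ^ (m + t) / 2) * indI m (et t + x)))]
    ring
  rw [step1]
  have hc1 : (0:ℝ) ≤ (2:ℝ) ^ m * (2 ^ m + 1) / 2 + 2 ^ m * 2 ^ m := by positivity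
  have part1 : ((2:ℝ) ^ m * (2 ^ m + 1) / 2 + 2 ^ m * 2 ^ m) * (lpTransDiff p f x * indI m x)
      ≤ (modulus p f m * ((2:ℝ) ^ m * (2 ^ m + 1) / 2 + 2 ^ m * 2 ^ m)) * indI m x := by
    have := mul_le_mul_of_nonneg_left key1 hc1
    calc _ ≤ _ := this
      _ = _ := by ring
  have part2 : ∑ t ∈ Finset.range m,
        ((2:ℝ) ^ (m + t) / 2) * (lpTransDiff p f x * indI m (et t + x))
      ≤ ∑ t ∈ Finset.range m, (modulus p f t * ((2:ℝ) ^ (m + t) / 2)) * indI m (et t + x) := by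
    refine Finset.sum_le_sum fun t ht => ?_
    have hc2 : (0:ℝ) ≤ (2:ℝ) ^ (m + t) / 2 := by positivity
    have := mul_le_mul_of_nonneg_left (key2 t ht) hc2
    calc _ ≤ _ := this
      _ = _ := by ring
  linarith

lemma IntPhi_nonneg (hp : 1 ≤ p) (hf : MemLp f (ENNReal.ofReal p) μG) (u : ℕ) :
    0 ≤ IntPhi p f u := by
  unfold IntPhi
  refine Finset.sum_nonneg fun m _ => add_nonneg ?_ (Finset.sum_nonneg fun t _ => ?_)
  · have := modulus_nonneg hp hf m
    positivity
  · have := modulus_nonneg hp hf t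
    positivity

lemma key_int (hp : 1 ≤ p) (hf : MemLp f (ENNReal.ofReal p) μG) {u j : ℕ}
    (hj : j < 2 ^ (u + 1)) :
    (j : ℝ) * ∫ t, lpTransDiff p f t * |fejerKernel j t| ∂μG ≤ IntPhi p f u := by
  rcases Nat.eq_zero_or_pos j with hj0 | hj0
  · rw [hj0]
    simpa using IntPhi_nonneg hp hf u
  have hfj : ∀ x : WalshG, (j:ℝ) * (lpTransDiff p f x * |fejerKernel j x|)
      = lpTransDiff p f x * |SD j x| := by
    intro x
    have : fejerKernel j x = (1 / (j:ℝ)) * SD j x := rfl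
    rw [this, abs_mul]
    have hjne : (j:ℝ) ≠ 0 := Nat.cast_ne_zero.mpr (Nat.pos_iff_ne_zero.mp hj0)
    rw [abs_of_nonneg (by positivity : (0:ℝ) ≤ 1 / (j:ℝ))]
    field_simp
  rw [← MeasureTheory.integral_const_mul]
  have hrw : (fun x => (j:ℝ) * (lpTransDiff p f x * |fejerKernel j x|))
      = fun x => lpTransDiff p f x * |SD j x| := funext hfj
  rw [hrw]
  calc ∫ x, lpTransDiff p f x * |SD j x| ∂μG
      ≤ ∫ x, Phi p f u x ∂μG := by
        refine integral_mono_of_nonneg (Filter.Eventually.of_forall fun x =>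
          mul_nonneg (lpTD_nonneg p f x) (abs_nonneg _)) (integrable_Phi u)
          (Filter.Eventually.of_forall fun x => ?_)
        calc lpTransDiff p f x * |SD j x|
            ≤ lpTransDiff p f x * Bmaj u x :=
              mul_le_mul_of_nonneg_left (abs_SD_le u j hj x) (lpTD_nonneg p f x)
          _ ≤ Phi p f u x := lpTD_mul_Bmaj_le hp hf u x
    _ = IntPhi p f u := integral_Phi u

end IntAux


section BookAux

lemma sum_sum_range_aux (g : ℕ → ℝ) (N : ℕ) :
    ∑ m ∈ Finset.range N, ∑ t ∈ Finset.range m, g t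
      = ∑ t ∈ Finset.range N, ((N - 1 - t : ℕ) : ℝ) * g t := by
  induction N with
  | zero => simp
  | succ N ih =>
    rw [Finset.sum_range_succ, ih, Finset.sum_range_succ
      (fun t => ((N + 1 - 1 - t : ℕ) : ℝ) * g t)]
    have h0 : ((N + 1 - 1 - N : ℕ) : ℝ) = 0 := by norm_num
    rw [h0, zero_mul, add_zero, ← Finset.sum_add_distrib]
    refine Finset.sum_congr rfl fun t ht => ?_
    rw [Finset.mem_range] at ht
    have h1 : (N + 1 - 1 - t : ℕ) = (N - 1 - t) + 1 := by omega
    rw [h1]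
    push_cast
    ring

/-- the dyadic-coefficient bound of `IntPhi`. -/
noncomputable def Cb (p : ℝ) (f : WalshG → ℝ) (u : ℕ) : ℝ :=
  ∑ s ∈ Finset.range (u + 1),
    (2 * (2:ℝ) ^ s + ((u - s : ℕ) : ℝ) * ((2:ℝ) ^ s / 2)) * modulus p f s

variable {p : ℝ} {f : WalshG → ℝ}

lemma IntPhi_le_Cb (hp : 1 ≤ p) (hf : MemLp f (ENNReal.ofReal p) μG) (u : ℕ) :
    IntPhi p f u ≤ Cb p f u := by
  unfold IntPhi Cb
  have hco : ∀ m t : ℕ, modulus p f t * ((2:ℝ) ^ (m + t) / 2) / 2 ^ m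
      = ((2:ℝ) ^ t / 2) * modulus p f t := by
    intro m t
    rw [pow_add]
    have h2m : ((2:ℝ) ^ m) ≠ 0 := by positivity
    field_simp
  calc (∑ m ∈ Finset.range (u+1), (modulus p f m * ((2:ℝ)^m*(2^m+1)/2 + 2^m*2^m)/2^m
        + ∑ t ∈ Finset.range m, modulus p f t * ((2:ℝ)^(m+t)/2)/2^m))
      = (∑ m ∈ Finset.range (u+1), modulus p f m * ((2:ℝ)^m*(2^m+1)/2 + 2^m*2^m)/2^m)
        + ∑ m ∈ Finset.range (u+1), ∑ t ∈ Finset.range m, ((2:ℝ)^t/2) * modulus p f t := by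
        rw [← Finset.sum_add_distrib]
        refine Finset.sum_congr rfl fun m _ => ?_
        congr 1
        exact Finset.sum_congr rfl fun t _ => hco m t
    _ = (∑ m ∈ Finset.range (u+1), modulus p f m * ((2:ℝ)^m*(2^m+1)/2 + 2^m*2^m)/2^m)
        + ∑ t ∈ Finset.range (u+1),
            ((u + 1 - 1 - t : ℕ) : ℝ) * (((2:ℝ)^t/2) * modulus p f t) := by
        rw [sum_sum_range_aux]
    _ ≤ _ := by
        rw [← Finset.sum_add_distrib]
        refine Finset.sum_le_sum fun s _ => ?_
        have h1 : (u + 1 - 1 - s : ℕ) = (u - s : ℕ) := by omega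
        rw [h1]
        have hm := modulus_nonneg hp hf s
        have h3 : (1:ℝ) ≤ 2 ^ s := one_le_pow₀ (by norm_num)
        have hcle : ((2:ℝ)^s*(2^s+1)/2 + 2^s*2^s) ≤ 2*(2:ℝ)^s*2^s := by nlinarith
        have h2 : modulus p f s * ((2:ℝ)^s*(2^s+1)/2 + 2^s*2^s)/2^s
            ≤ 2 * (2:ℝ)^s * modulus p f s := by
          rw [div_le_iff₀ (by positivity : (0:ℝ) < 2^s)]
          calc modulus p f s * ((2:ℝ)^s*(2^s+1)/2 + 2^s*2^s)
              ≤ modulus p f s * (2*(2:ℝ)^s*2^s) := mul_le_mul_of_nonneg_left hcle hm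
            _ = 2 * (2:ℝ)^s * modulus p f s * 2^s := by ring
        have hR : (2*(2:ℝ)^s + ((u-s:ℕ):ℝ)*((2:ℝ)^s/2)) * modulus p f s
            = 2*(2:ℝ)^s*modulus p f s + ((u-s:ℕ):ℝ) * ((2:ℝ)^s/2 * modulus p f s) := by
          ring
        rw [hR]
        linarith

lemma tele_q (g : ℕ → ℝ) (a : ℕ) :
    ∀ b, a ≤ b → ∑ j ∈ Finset.Ico a b, (g j - g (j+1)) = g a - g b := by
  intro b
  induction b with
  | zero => intro h; rw [Nat.le_zero.mp h]; simp
  | succ b ih =>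
    intro hab
    by_cases hb : a ≤ b
    · rw [Finset.sum_Ico_succ_top hb, ih hb]; ring
    · have : a = b + 1 := by omega
      subst this; simp

lemma tele_wdq_le (q : ℕ → ℝ) (hq_anti : Antitone q) (s : ℕ) :
    ∀ n, s ≤ n → ∑ u ∈ Finset.Ico s n, ((u - s : ℕ):ℝ) * (q (2^u) - q (2^(u+1)))
      ≤ ((n - s : ℕ):ℝ) * (q (2^s) - q (2^n)) := by
  intro n
  induction n with
  | zero => intro h; rw [Nat.le_zero.mp h]; simp
  | succ n ih =>
    intro hs
    by_cases hsn : s ≤ n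
    · rw [Finset.sum_Ico_succ_top hsn]
      have h1 := ih hsn
      have h2 : q (2^(n+1)) ≤ q (2^n) :=
        hq_anti (Nat.pow_le_pow_right (by norm_num) (Nat.le_succ n))
      have h3 : q (2^(n+1)) ≤ q (2^s) :=
        hq_anti (Nat.pow_le_pow_right (by norm_num) (by omega))
      have hc : ((n+1-s:ℕ):ℝ) = ((n-s:ℕ):ℝ) + 1 := by
        rw [show (n+1-s:ℕ) = (n-s)+1 from by omega]
        push_cast; ring
      rw [hc]
      nlinarith [h1, h2, h3, (Nat.cast_nonneg (n-s) : (0:ℝ) ≤ ((n - s : ℕ) : ℝ))]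
    · have : s = n + 1 := by omega
      subst this; simp

lemma sum_blocks (T : ℕ → ℝ) (n : ℕ) :
    ∑ j ∈ Finset.range (2^n), T j
      = T 0 + ∑ u ∈ Finset.range n, ∑ j ∈ Finset.Ico (2^u) (2^(u+1)), T j := by
  induction n with
  | zero => simp
  | succ n ih =>
    have h2 : (2:ℕ)^n ≤ 2^(n+1) := Nat.pow_le_pow_right (by norm_num) (Nat.le_succ n)
    rw [Finset.range_eq_Ico, ← Finset.sum_Ico_consecutive T (Nat.zero_le (2^n)) h2,
      ← Finset.range_eq_Ico, ih, Finset.sum_range_succ, add_assoc]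

end BookAux

/-- the estimate of the term `II` for non-increasing weights. -/
theorem norlund_II_estimate
    (p : ℝ) (hp : 1 ≤ p)
    (q : ℕ → ℝ) (hq_nonneg : ∀ k, 0 ≤ q k) (hq_anti : Antitone q) (hq0 : 0 < q 0)
    (f : WalshG → ℝ) (hf : MemLp f (ENNReal.ofReal p) μG)
    (n : ℕ) (hq2n : 0 < q (2 ^ n)) :
    (1 / Qnor q (2 ^ n)) * ∑ j ∈ Finset.range (2 ^ n - 1),
        (q j - q (j + 1)) * (j : ℝ) * ∫ t, lpTransDiff p f t * |fejerKernel j t| ∂μG ≤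
      3 * ∑ s ∈ Finset.range n,
            (((n - s : ℕ) : ℝ) / 2 ^ (n - s)) * (q (2 ^ s) / q (2 ^ n)) * modulus p f s := by
  classical
  set T : ℕ → ℝ := fun j =>
    (q j - q (j + 1)) * (j : ℝ) * ∫ t, lpTransDiff p f t * |fejerKernel j t| ∂μG with hT
  have hqd : ∀ j : ℕ, 0 ≤ q j - q (j+1) := fun j => sub_nonneg.mpr (hq_anti (Nat.le_succ j))
  have hTnn : ∀ j, 0 ≤ T j := fun j =>
    mul_nonneg (mul_nonneg (hqd j) (Nat.cast_nonneg j))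
      (integral_nonneg fun t => mul_nonneg (lpTD_nonneg p f t) (abs_nonneg _))
  have hT0 : T 0 = 0 := by simp [hT]
  have hblock : ∀ u ∈ Finset.range n, ∑ j ∈ Finset.Ico (2^u) (2^(u+1)), T j
      ≤ (q (2^u) - q (2^(u+1))) * Cb p f u := by
    intro u _
    have hstep : ∀ j ∈ Finset.Ico (2^u) (2^(u+1)), T j ≤ (q j - q (j+1)) * Cb p f u := by
      intro j hj
      rw [Finset.mem_Ico] at hj
      have hkey := le_trans (key_int hp hf (u := u) (j := j) hj.2) (IntPhi_le_Cb hp hf u)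
      calc T j = (q j - q (j+1))
            * ((j:ℝ) * ∫ t, lpTransDiff p f t * |fejerKernel j t| ∂μG) := by
            rw [hT]; ring
        _ ≤ (q j - q (j+1)) * Cb p f u := mul_le_mul_of_nonneg_left hkey (hqd j)
    calc ∑ j ∈ Finset.Ico (2^u) (2^(u+1)), T j
        ≤ ∑ j ∈ Finset.Ico (2^u) (2^(u+1)), (q j - q (j+1)) * Cb p f u :=
          Finset.sum_le_sum hstep
      _ = (q (2^u) - q (2^(u+1))) * Cb p f u := by
          rw [← Finset.sum_mul, tele_q q (2^u) (2^(u+1))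
            (Nat.pow_le_pow_right (by norm_num) (Nat.le_succ u))]
  have hS1 : ∑ j ∈ Finset.range (2^n - 1), T j
      ≤ ∑ u ∈ Finset.range n, (q (2^u) - q (2^(u+1))) * Cb p f u := by
    calc ∑ j ∈ Finset.range (2^n - 1), T j ≤ ∑ j ∈ Finset.range (2^n), T j :=
        Finset.sum_le_sum_of_subset_of_nonneg
          (Finset.range_subset_range.mpr (Nat.sub_le _ _)) (fun j _ _ => hTnn j)
      _ = T 0 + ∑ u ∈ Finset.range n, ∑ j ∈ Finset.Ico (2^u) (2^(u+1)), T j := sum_blocks T n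
      _ = ∑ u ∈ Finset.range n, ∑ j ∈ Finset.Ico (2^u) (2^(u+1)), T j := by rw [hT0, zero_add]
      _ ≤ _ := Finset.sum_le_sum hblock
  have hS2 : ∑ u ∈ Finset.range n, (q (2^u) - q (2^(u+1))) * Cb p f u
      ≤ ∑ s ∈ Finset.range n, 3 * ((n-s:ℕ):ℝ) * 2^s * q (2^s) * modulus p f s := by
    have hexp : ∀ u : ℕ, (q (2^u) - q (2^(u+1))) * Cb p f u
        = ∑ s ∈ Finset.range (u+1), ((q (2^u) - q (2^(u+1)))
            * ((2*(2:ℝ)^s + ((u-s:ℕ):ℝ)*((2:ℝ)^s/2)) * modulus p f s)) := by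
      intro u; rw [Cb, Finset.mul_sum]
    calc ∑ u ∈ Finset.range n, (q (2^u) - q (2^(u+1))) * Cb p f u
        = ∑ u ∈ Finset.Ico 0 n, ∑ s ∈ Finset.Ico 0 (u+1), ((q (2^u) - q (2^(u+1)))
            * ((2*(2:ℝ)^s + ((u-s:ℕ):ℝ)*((2:ℝ)^s/2)) * modulus p f s)) := by
          rw [Finset.range_eq_Ico]
          refine Finset.sum_congr rfl fun u _ => ?_
          rw [hexp u, Finset.range_eq_Ico]
      _ = ∑ s ∈ Finset.Ico 0 n, ∑ u ∈ Finset.Ico s n, ((q (2^u) - q (2^(u+1)))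
            * ((2*(2:ℝ)^s + ((u-s:ℕ):ℝ)*((2:ℝ)^s/2)) * modulus p f s)) :=
          (Finset.sum_Ico_Ico_comm 0 n (fun s u => (q (2^u) - q (2^(u+1)))
            * ((2*(2:ℝ)^s + ((u-s:ℕ):ℝ)*((2:ℝ)^s/2)) * modulus p f s))).symm
      _ ≤ ∑ s ∈ Finset.range n, 3 * ((n-s:ℕ):ℝ) * 2^s * q (2^s) * modulus p f s := by
          rw [Finset.range_eq_Ico]
          refine Finset.sum_le_sum fun s hs => ?_
          rw [Finset.mem_Ico] at hs
          replace hs : s < n := hs.2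
          have hωnn := modulus_nonneg hp hf s
          have htel1 : ∑ u ∈ Finset.Ico s n, (q (2^u) - q (2^(u+1))) = q (2^s) - q (2^n) :=
            tele_q (fun u => q (2^u)) s n (le_of_lt hs)
          have htel2 := tele_wdq_le q hq_anti s n (le_of_lt hs)
          have hsplit : ∑ u ∈ Finset.Ico s n, ((q (2^u) - q (2^(u+1)))
              * ((2*(2:ℝ)^s + ((u-s:ℕ):ℝ)*((2:ℝ)^s/2)) * modulus p f s))
              = (2*(2:ℝ)^s * modulus p f s) * (∑ u ∈ Finset.Ico s n, (q (2^u) - q (2^(u+1))))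
                + ((2:ℝ)^s/2 * modulus p f s)
                  * (∑ u ∈ Finset.Ico s n, ((u-s:ℕ):ℝ) * (q (2^u) - q (2^(u+1)))) := by
            rw [Finset.mul_sum, Finset.mul_sum, ← Finset.sum_add_distrib]
            refine Finset.sum_congr rfl fun u _ => ?_
            ring
          rw [hsplit, htel1]
          have hqs : 0 ≤ q (2^s) := hq_nonneg _
          have hq2nn : 0 ≤ q (2^n) := hq_nonneg _
          have hk1 : (1:ℝ) ≤ ((n-s:ℕ):ℝ) := by
            have h1 : 1 ≤ n - s := by omega
            exact_mod_cast h1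
          have hP : (0:ℝ) ≤ 2^s * modulus p f s := mul_nonneg (by positivity) hωnn
          have hd0 : 0 ≤ q (2^s) - q (2^n) :=
            sub_nonneg.mpr (hq_anti (Nat.pow_le_pow_right (by norm_num) (le_of_lt hs)))
          have hb2 : ((2:ℝ)^s/2 * modulus p f s)
                * (∑ u ∈ Finset.Ico s n, ((u-s:ℕ):ℝ) * (q (2^u) - q (2^(u+1))))
              ≤ ((2:ℝ)^s/2 * modulus p f s) * (((n-s:ℕ):ℝ) * (q (2^s) - q (2^n))) :=
            mul_le_mul_of_nonneg_left htel2 (mul_nonneg (by positivity) hωnn)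
          nlinarith [hb2, mul_nonneg hP hqs, mul_nonneg hP hq2nn,
            mul_nonneg (mul_nonneg hP hqs) (sub_nonneg.mpr hk1),
            mul_nonneg (mul_nonneg hP hq2nn) (sub_nonneg.mpr hk1),
            mul_nonneg (mul_nonneg hP hd0) (sub_nonneg.mpr hk1)]
  have hQ : (2^n : ℝ) * q (2^n) ≤ Qnor q (2^n) := by
    unfold Qnor
    calc (2^n:ℝ) * q (2^n) = ∑ _k ∈ Finset.range (2^n), q (2^n) := by
          rw [Finset.sum_const, Finset.card_range, nsmul_eq_mul]
          push_cast
          ring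
      _ ≤ ∑ k ∈ Finset.range (2^n), q k :=
        Finset.sum_le_sum fun k hk => hq_anti (le_of_lt (Finset.mem_range.mp hk))
  have hQn : (0:ℝ) < (2^n:ℝ) * q (2^n) := mul_pos (by positivity) hq2n
  have hSnn : 0 ≤ ∑ j ∈ Finset.range (2^n-1), T j := Finset.sum_nonneg fun j _ => hTnn j
  have h1Q : 1 / Qnor q (2^n) ≤ 1 / ((2^n:ℝ) * q (2^n)) := one_div_le_one_div_of_le hQn hQ
  calc (1 / Qnor q (2^n)) * ∑ j ∈ Finset.range (2^n-1), T j
      ≤ (1 / ((2^n:ℝ) * q (2^n))) * ∑ j ∈ Finset.range (2^n-1), T j :=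
        mul_le_mul_of_nonneg_right h1Q hSnn
    _ ≤ (1 / ((2^n:ℝ) * q (2^n)))
        * ∑ s ∈ Finset.range n, 3*((n-s:ℕ):ℝ)*2^s*q (2^s)*modulus p f s :=
        mul_le_mul_of_nonneg_left (le_trans hS1 hS2) (by positivity)
    _ = 3 * ∑ s ∈ Finset.range n,
          (((n - s : ℕ) : ℝ) / 2 ^ (n - s)) * (q (2 ^ s) / q (2 ^ n)) * modulus p f s := by
        rw [Finset.mul_sum, Finset.mul_sum]
        refine Finset.sum_congr rfl fun s hs => ?_
        rw [Finset.mem_range] at hs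
        have hpow : (2:ℝ)^(n-s) * 2^s = 2^n := by
          rw [← pow_add]
          congr 1
          omega
        have hqne : q (2^n) ≠ 0 := ne_of_gt hq2n
        have h2s : ((2:ℝ)^s) ≠ 0 := by positivity
        have h2ns : ((2:ℝ)^(n-s)) ≠ 0 := by positivity
        rw [← hpow]
        field_simp
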